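/- Let V be a multiplicative unitary on a finite-dimensional Hilbert space H, and let f be a unit vector with V(f⊗f) = f⊗f. Then L(ω_{f,f}) is the orthogonal projection onto H^f = {η : V(f⊗η) = f⊗η}, ρ(ω_{f,f}) is the orthogonal projection onto H_f = {η : V(η⊗f) = η⊗f}, and these two projections commute. -/

import Mathlib

open scoped InnerProductSpace ComplexOrder

noncomputable section

namespace MU

variable {ι : Type*} [Fintype ι] [DecidableEq ι]

/-- The elementary tensor `f ⊗ g` of two vectors, in the model
`H ⊗ H = EuclideanSpace ℂ (ι × ι)`. -/
def tens (f g : EuclideanSpace ℂ ι) : EuclideanSpace ℂ (ι × ι) :=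
  WithLp.toLp 2 (fun p : ι × ι => f p.1 * g p.2)

/-- `g ↦ f ⊗ g` as a linear map. -/
def tensL (f : EuclideanSpace ℂ ι) :
    EuclideanSpace ℂ ι →ₗ[ℂ] EuclideanSpace ℂ (ι × ι) where
  toFun g := tens f g
  map_add' x y := by
    ext p; simp only [tens, PiLp.add_apply]; ring
  map_smul' c x := by
    ext p; simp only [tens, PiLp.smul_apply, smul_eq_mul, RingHom.id_apply]; ring

/-- `f ↦ f ⊗ g` as a linear map. -/
def tensR (g : EuclideanSpace ℂ ι) :
    EuclideanSpace ℂ ι →ₗ[ℂ] EuclideanSpace ℂ (ι × ι) where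
  toFun f := tens f g
  map_add' x y := by
    ext p; simp only [tens, PiLp.add_apply]; ring
  map_smul' c x := by
    ext p; simp only [tens, PiLp.smul_apply, smul_eq_mul, RingHom.id_apply]; ring

/-- Action of a matrix on a Euclidean space vector. -/
def appM {κ : Type*} [Fintype κ] (M : Matrix κ κ ℂ) (v : EuclideanSpace ℂ κ) :
    EuclideanSpace ℂ κ :=
  WithLp.toLp 2 (fun i => ∑ j, M i j * v j)

/-- Action of a matrix as a linear map on the Euclidean space. -/
def mact {κ : Type*} [Fintype κ] (M : Matrix κ κ ℂ) :
    EuclideanSpace ℂ κ →ₗ[ℂ] EuclideanSpace ℂ κ where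
  toFun := appM M
  map_add' x y := by
    ext i; simp only [appM, PiLp.add_apply, mul_add, Finset.sum_add_distrib]
  map_smul' c x := by
    ext i; simp only [appM, PiLp.smul_apply, smul_eq_mul, RingHom.id_apply, Finset.mul_sum]
    exact Finset.sum_congr rfl fun j _ => by ring

/-- The leg `V₁₂` on `H ⊗ H ⊗ H`. -/
def leg12 (V : Matrix (ι × ι) (ι × ι) ℂ) : Matrix (ι × ι × ι) (ι × ι × ι) ℂ :=
  fun p q => V (p.1, p.2.1) (q.1, q.2.1) * (if p.2.2 = q.2.2 then 1 else 0)

/-- The leg `V₁₃` on `H ⊗ H ⊗ H`. -/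
def leg13 (V : Matrix (ι × ι) (ι × ι) ℂ) : Matrix (ι × ι × ι) (ι × ι × ι) ℂ :=
  fun p q => V (p.1, p.2.2) (q.1, q.2.2) * (if p.2.1 = q.2.1 then 1 else 0)

/-- The leg `V₂₃` on `H ⊗ H ⊗ H`. -/
def leg23 (V : Matrix (ι × ι) (ι × ι) ℂ) : Matrix (ι × ι × ι) (ι × ι × ι) ℂ :=
  fun p q => V (p.2.1, p.2.2) (q.2.1, q.2.2) * (if p.1 = q.1 then 1 else 0)

/-- The pentagon equation `V₁₂ V₁₃ V₂₃ = V₂₃ V₁₂`. -/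
def Pentagon (V : Matrix (ι × ι) (ι × ι) ℂ) : Prop :=
  leg12 V * leg13 V * leg23 V = leg23 V * leg12 V

/-- `V` is a multiplicative unitary: a unitary satisfying the pentagon equation. -/
def IsMU (V : Matrix (ι × ι) (ι × ι) ℂ) : Prop :=
  V * V.conjTranspose = 1 ∧ V.conjTranspose * V = 1 ∧ Pentagon V

/-- `ξ` is a fixed vector for `V`. -/
def Fixed (V : Matrix (ι × ι) (ι × ι) ℂ) (ξ : EuclideanSpace ℂ ι) : Prop :=
  ∀ η, mact V (tens ξ η) = tens ξ η

/-- `ξ` is a cofixed vector for `V`. -/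
def Cofixed (V : Matrix (ι × ι) (ι × ι) ℂ) (ξ : EuclideanSpace ℂ ι) : Prop :=
  ∀ η, mact V (tens η ξ) = tens η ξ

/-- `V` has multiplicity 1, with fixed unit vector `e` and cofixed unit vector `eHat`. -/
def Mult1 (V : Matrix (ι × ι) (ι × ι) ℂ) (e eHat : EuclideanSpace ℂ ι) : Prop :=
  ‖e‖ = 1 ∧ ‖eHat‖ = 1 ∧ Fixed V e ∧ Cofixed V eHat ∧
    (∀ ξ, Fixed V ξ → ∃ c : ℂ, ξ = c • e) ∧
    (∀ ξ, Cofixed V ξ → ∃ c : ℂ, ξ = c • eHat)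

/-- A pre-subgroup of `V` (with fixed vector `e`): a unit vector `f` with
`⟨f,e⟩ > 0` and `V(f⊗f) = f⊗f`. -/
def IsPreSubgroup (V : Matrix (ι × ι) (ι × ι) ℂ) (e f : EuclideanSpace ℂ ι) : Prop :=
  ‖f‖ = 1 ∧ 0 < ⟪f, e⟫_ℂ ∧ mact V (tens f f) = tens f f

/-- The subspace `H^f = {η : V(f⊗η) = f⊗η}`. -/
def subUp (V : Matrix (ι × ι) (ι × ι) ℂ) (f : EuclideanSpace ℂ ι) :
    Submodule ℂ (EuclideanSpace ℂ ι) :=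
  LinearMap.ker ((mact V).comp (tensL f) - tensL f)

/-- The subspace `H_f = {η : V(η⊗f) = η⊗f}`. -/
def subDown (V : Matrix (ι × ι) (ι × ι) ℂ) (f : EuclideanSpace ℂ ι) :
    Submodule ℂ (EuclideanSpace ℂ ι) :=
  LinearMap.ker ((mact V).comp (tensR f) - tensR f)

/-- The slice `L(ω_{ξ,η}) = (ω_{ξ,η} ⊗ id)(V)`. -/
def Lslice (V : Matrix (ι × ι) (ι × ι) ℂ) (ξ η : EuclideanSpace ℂ ι) : Matrix ι ι ℂ :=
  fun a b => ∑ x, ∑ y, (starRingEnd ℂ) (ξ x) * η y * V (x, a) (y, b)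

/-- The slice `ρ(ω_{ξ,η}) = (id ⊗ ω_{ξ,η})(V)`. -/
def Rslice (V : Matrix (ι × ι) (ι × ι) ℂ) (ξ η : EuclideanSpace ℂ ι) : Matrix ι ι ℂ :=
  fun a b => ∑ x, ∑ y, (starRingEnd ℂ) (ξ x) * η y * V (a, x) (b, y)

/-- The slice `L(ω) = (ω ⊗ id)(V)` of a general linear functional `ω` on `L(H)`. -/
def LslF (V : Matrix (ι × ι) (ι × ι) ℂ) (ω : Matrix ι ι ℂ →ₗ[ℂ] ℂ) : Matrix ι ι ℂ :=
  fun a b => ω (fun x y => V (x, a) (y, b))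

/-- A state on `L(H)`: a unital positive linear functional. -/
def IsState (ω : Matrix ι ι ℂ →ₗ[ℂ] ℂ) : Prop :=
  ω 1 = 1 ∧ ∀ M : Matrix ι ι ℂ, M.PosSemidef → ∃ r : ℝ, 0 ≤ r ∧ ω M = r

section Aux
set_option linter.unusedSectionVars false

variable {ι : Type*} [Fintype ι] [DecidableEq ι]

local notation "𝕔" => starRingEnd ℂ

/-- entrywise form of `Vᴴ * V = 1` -/
lemma unit_col {V : Matrix (ι × ι) (ι × ι) ℂ} (hV2 : V.conjTranspose * V = 1)
    (q r : ι × ι) :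
    ∑ p, 𝕔 (V p q) * V p r = if q = r then 1 else 0 := by
  have h := congrFun (congrFun hV2 q) r
  simpa [Matrix.mul_apply, Matrix.conjTranspose_apply, Matrix.one_apply] using h

/-- if `g` is fixed by `V` then it is fixed by `V*`. -/
lemma starfix {V : Matrix (ι × ι) (ι × ι) ℂ} (hV2 : V.conjTranspose * V = 1)
    (g : ι × ι → ℂ) (hg : ∀ p, ∑ q, V p q * g q = g p) (q : ι × ι) :
    ∑ p, 𝕔 (V p q) * g p = g q := by
  calc ∑ p, 𝕔 (V p q) * g p = ∑ p, 𝕔 (V p q) * ∑ r, V p r * g r := by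
        simp only [hg]
    _ = ∑ p, ∑ r, (𝕔 (V p q) * V p r) * g r := by
        simp only [Finset.mul_sum, mul_assoc]
    _ = ∑ r, (∑ p, 𝕔 (V p q) * V p r) * g r := by
        rw [Finset.sum_comm]; simp only [Finset.sum_mul]
    _ = g q := by
        simp only [unit_col hV2]
        simp

lemma pent_entry {V : Matrix (ι × ι) (ι × ι) ℂ} (hP : Pentagon V)
    (x u a y u' b : ι) :
    ∑ s2, ∑ r, (∑ s1, V (x, u) (s1, s2) * V (s1, a) (y, r)) * V (s2, r) (u', b)
      = ∑ s, V (u, a) (s, b) * V (x, s) (y, u') := by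
  have h := congrFun (congrFun hP (x, (u, a))) (y, (u', b))
  simp only [Matrix.mul_apply, leg12, leg13, leg23, Fintype.sum_prod_type,
    mul_ite, ite_mul, mul_one, one_mul, mul_zero, zero_mul, Finset.sum_ite_irrel,
    Finset.sum_const_zero, Finset.sum_ite_eq, Finset.sum_ite_eq',
    Finset.mem_univ, if_true] at h
  exact h


section Swaps
variable {M : Type*} [AddCommMonoid M] {α β γ δ ε ζ' η' : Type*}
  [Fintype α] [Fintype β] [Fintype γ] [Fintype δ] [Fintype ε] [Fintype ζ'] [Fintype η']

lemma sw5_1 (g : α → β → γ → δ → ε → M) :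
    ∑ a, ∑ b, ∑ c, ∑ d, ∑ e, g a b c d e = ∑ b, ∑ a, ∑ c, ∑ d, ∑ e, g a b c d e :=
  Finset.sum_comm
lemma sw5_2 (g : α → β → γ → δ → ε → M) :
    ∑ a, ∑ b, ∑ c, ∑ d, ∑ e, g a b c d e = ∑ a, ∑ c, ∑ b, ∑ d, ∑ e, g a b c d e :=
  Finset.sum_congr rfl fun _ _ => Finset.sum_comm
lemma sw5_3 (g : α → β → γ → δ → ε → M) :
    ∑ a, ∑ b, ∑ c, ∑ d, ∑ e, g a b c d e = ∑ a, ∑ b, ∑ d, ∑ c, ∑ e, g a b c d e :=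
  Finset.sum_congr rfl fun _ _ => Finset.sum_congr rfl fun _ _ => Finset.sum_comm
lemma sw5_4 (g : α → β → γ → δ → ε → M) :
    ∑ a, ∑ b, ∑ c, ∑ d, ∑ e, g a b c d e = ∑ a, ∑ b, ∑ c, ∑ e, ∑ d, g a b c d e :=
  Finset.sum_congr rfl fun _ _ => Finset.sum_congr rfl fun _ _ =>
    Finset.sum_congr rfl fun _ _ => Finset.sum_comm

lemma sw4_1 (g : α → β → γ → δ → M) :
    ∑ a, ∑ b, ∑ c, ∑ d, g a b c d = ∑ b, ∑ a, ∑ c, ∑ d, g a b c d := Finset.sum_comm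
lemma sw4_2 (g : α → β → γ → δ → M) :
    ∑ a, ∑ b, ∑ c, ∑ d, g a b c d = ∑ a, ∑ c, ∑ b, ∑ d, g a b c d :=
  Finset.sum_congr rfl fun _ _ => Finset.sum_comm
lemma sw4_3 (g : α → β → γ → δ → M) :
    ∑ a, ∑ b, ∑ c, ∑ d, g a b c d = ∑ a, ∑ b, ∑ d, ∑ c, g a b c d :=
  Finset.sum_congr rfl fun _ _ => Finset.sum_congr rfl fun _ _ => Finset.sum_comm

end Swaps

/- permutation helpers for iterated sums -/

lemma perm5A {M : Type*} [AddCommMonoid M] (g : ι → ι → ι → ι → ι → M) :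
    ∑ r, ∑ s2, ∑ u', ∑ s1, ∑ y, g r s2 u' s1 y
      = ∑ s2, ∑ r, ∑ s1, ∑ y, ∑ u', g r s2 u' s1 y :=
  calc ∑ r, ∑ s2, ∑ u', ∑ s1, ∑ y, g r s2 u' s1 y
      = ∑ s2, ∑ r, ∑ u', ∑ s1, ∑ y, g r s2 u' s1 y := Finset.sum_comm
    _ = ∑ s2, ∑ r, ∑ s1, ∑ u', ∑ y, g r s2 u' s1 y :=
        Finset.sum_congr rfl fun _ _ => Finset.sum_congr rfl fun _ _ => Finset.sum_comm
    _ = ∑ s2, ∑ r, ∑ s1, ∑ y, ∑ u', g r s2 u' s1 y :=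
        Finset.sum_congr rfl fun _ _ => Finset.sum_congr rfl fun _ _ =>
          Finset.sum_congr rfl fun _ _ => Finset.sum_comm

-- move positions 6,7 (x,u) of a 7-fold sum to the front, i.e.
-- (s2,r,s1,y,u',x,u) ↦ (x,u,y,u',s2,r,s1)
set_option maxHeartbeats 1000000 in
lemma perm7A {M : Type*} [AddCommMonoid M] (g : ι → ι → ι → ι → ι → ι → ι → M) :
    ∑ s2, ∑ r, ∑ s1, ∑ y, ∑ u', ∑ x, ∑ u, g s2 r s1 y u' x u
      = ∑ x, ∑ u, ∑ y, ∑ u', ∑ s2, ∑ r, ∑ s1, g s2 r s1 y u' x u := by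
  have swap4 : ∀ h : ι → ι → ι → ι → ι → ι → ι → M,
      (∑ a, ∑ b, ∑ c, ∑ d, ∑ e, ∑ i, ∑ j, h a b c d e i j)
        = ∑ a, ∑ b, ∑ c, ∑ e, ∑ d, ∑ i, ∑ j, h a b c d e i j := fun h =>
    Finset.sum_congr rfl fun _ _ => Finset.sum_congr rfl fun _ _ =>
      Finset.sum_congr rfl fun _ _ => Finset.sum_comm
  have swap3 : ∀ h : ι → ι → ι → ι → ι → ι → ι → M,
      (∑ a, ∑ b, ∑ c, ∑ d, ∑ e, ∑ i, ∑ j, h a b c d e i j)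
        = ∑ a, ∑ b, ∑ d, ∑ c, ∑ e, ∑ i, ∑ j, h a b c d e i j := fun h =>
    Finset.sum_congr rfl fun _ _ => Finset.sum_congr rfl fun _ _ => Finset.sum_comm
  have swap2 : ∀ h : ι → ι → ι → ι → ι → ι → ι → M,
      (∑ a, ∑ b, ∑ c, ∑ d, ∑ e, ∑ i, ∑ j, h a b c d e i j)
        = ∑ a, ∑ c, ∑ b, ∑ d, ∑ e, ∑ i, ∑ j, h a b c d e i j := fun h =>
    Finset.sum_congr rfl fun _ _ => Finset.sum_comm
  have swap1 : ∀ h : ι → ι → ι → ι → ι → ι → ι → M,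
      (∑ a, ∑ b, ∑ c, ∑ d, ∑ e, ∑ i, ∑ j, h a b c d e i j)
        = ∑ b, ∑ a, ∑ c, ∑ d, ∑ e, ∑ i, ∑ j, h a b c d e i j := fun h =>
    Finset.sum_comm
  have swap5 : ∀ h : ι → ι → ι → ι → ι → ι → ι → M,
      (∑ a, ∑ b, ∑ c, ∑ d, ∑ e, ∑ i, ∑ j, h a b c d e i j)
        = ∑ a, ∑ b, ∑ c, ∑ d, ∑ i, ∑ e, ∑ j, h a b c d e i j := fun h =>
    Finset.sum_congr rfl fun _ _ => Finset.sum_congr rfl fun _ _ =>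
      Finset.sum_congr rfl fun _ _ => Finset.sum_congr rfl fun _ _ => Finset.sum_comm
  have swap6 : ∀ h : ι → ι → ι → ι → ι → ι → ι → M,
      (∑ a, ∑ b, ∑ c, ∑ d, ∑ e, ∑ i, ∑ j, h a b c d e i j)
        = ∑ a, ∑ b, ∑ c, ∑ d, ∑ e, ∑ j, ∑ i, h a b c d e i j := fun h =>
    Finset.sum_congr rfl fun _ _ => Finset.sum_congr rfl fun _ _ =>
      Finset.sum_congr rfl fun _ _ => Finset.sum_congr rfl fun _ _ =>
        Finset.sum_congr rfl fun _ _ => Finset.sum_comm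
  -- (s2,r,s1,y,u',x,u): bring x to front: swaps at 5,4,3,2,1; then u to pos2: 6,5,4,3,2;
  calc ∑ s2, ∑ r, ∑ s1, ∑ y, ∑ u', ∑ x, ∑ u, g s2 r s1 y u' x u
      = ∑ s2, ∑ r, ∑ s1, ∑ y, ∑ x, ∑ u', ∑ u, g s2 r s1 y u' x u := swap5 _
    _ = ∑ s2, ∑ r, ∑ s1, ∑ x, ∑ y, ∑ u', ∑ u, g s2 r s1 y u' x u := swap4 _
    _ = ∑ s2, ∑ r, ∑ x, ∑ s1, ∑ y, ∑ u', ∑ u, g s2 r s1 y u' x u := swap3 _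
    _ = ∑ s2, ∑ x, ∑ r, ∑ s1, ∑ y, ∑ u', ∑ u, g s2 r s1 y u' x u := swap2 _
    _ = ∑ x, ∑ s2, ∑ r, ∑ s1, ∑ y, ∑ u', ∑ u, g s2 r s1 y u' x u := swap1 _
    _ = ∑ x, ∑ s2, ∑ r, ∑ s1, ∑ y, ∑ u, ∑ u', g s2 r s1 y u' x u := swap6 _
    _ = ∑ x, ∑ s2, ∑ r, ∑ s1, ∑ u, ∑ y, ∑ u', g s2 r s1 y u' x u := swap5 _
    _ = ∑ x, ∑ s2, ∑ r, ∑ u, ∑ s1, ∑ y, ∑ u', g s2 r s1 y u' x u := swap4 _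
    _ = ∑ x, ∑ s2, ∑ u, ∑ r, ∑ s1, ∑ y, ∑ u', g s2 r s1 y u' x u := swap3 _
    _ = ∑ x, ∑ u, ∑ s2, ∑ r, ∑ s1, ∑ y, ∑ u', g s2 r s1 y u' x u := swap2 _
    _ = ∑ x, ∑ u, ∑ s2, ∑ r, ∑ y, ∑ s1, ∑ u', g s2 r s1 y u' x u := swap5 _
    _ = ∑ x, ∑ u, ∑ s2, ∑ y, ∑ r, ∑ s1, ∑ u', g s2 r s1 y u' x u := swap4 _
    _ = ∑ x, ∑ u, ∑ y, ∑ s2, ∑ r, ∑ s1, ∑ u', g s2 r s1 y u' x u := swap3 _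
    _ = ∑ x, ∑ u, ∑ y, ∑ s2, ∑ r, ∑ u', ∑ s1, g s2 r s1 y u' x u := swap6 _
    _ = ∑ x, ∑ u, ∑ y, ∑ s2, ∑ u', ∑ r, ∑ s1, g s2 r s1 y u' x u := swap5 _
    _ = ∑ x, ∑ u, ∑ y, ∑ u', ∑ s2, ∑ r, ∑ s1, g s2 r s1 y u' x u := swap4 _

-- (x,u,y,u',s) ↦ (u,s,x,y,u')
lemma perm5B {M : Type*} [AddCommMonoid M] (g : ι → ι → ι → ι → ι → M) :
    ∑ x, ∑ u, ∑ y, ∑ u', ∑ s, g x u y u' s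
      = ∑ u, ∑ s, ∑ x, ∑ y, ∑ u', g x u y u' s := by
  have swap1 : ∀ h : ι → ι → ι → ι → ι → M,
      (∑ a, ∑ b, ∑ c, ∑ d, ∑ e, h a b c d e)
        = ∑ b, ∑ a, ∑ c, ∑ d, ∑ e, h a b c d e := fun h => Finset.sum_comm
  have swap2 : ∀ h : ι → ι → ι → ι → ι → M,
      (∑ a, ∑ b, ∑ c, ∑ d, ∑ e, h a b c d e)
        = ∑ a, ∑ c, ∑ b, ∑ d, ∑ e, h a b c d e := fun h =>
    Finset.sum_congr rfl fun _ _ => Finset.sum_comm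
  have swap3 : ∀ h : ι → ι → ι → ι → ι → M,
      (∑ a, ∑ b, ∑ c, ∑ d, ∑ e, h a b c d e)
        = ∑ a, ∑ b, ∑ d, ∑ c, ∑ e, h a b c d e := fun h =>
    Finset.sum_congr rfl fun _ _ => Finset.sum_congr rfl fun _ _ => Finset.sum_comm
  have swap4 : ∀ h : ι → ι → ι → ι → ι → M,
      (∑ a, ∑ b, ∑ c, ∑ d, ∑ e, h a b c d e)
        = ∑ a, ∑ b, ∑ c, ∑ e, ∑ d, h a b c d e := fun h =>
    Finset.sum_congr rfl fun _ _ => Finset.sum_congr rfl fun _ _ =>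
      Finset.sum_congr rfl fun _ _ => Finset.sum_comm
  calc ∑ x, ∑ u, ∑ y, ∑ u', ∑ s, g x u y u' s
      = ∑ x, ∑ u, ∑ y, ∑ s, ∑ u', g x u y u' s := swap4 _
    _ = ∑ x, ∑ u, ∑ s, ∑ y, ∑ u', g x u y u' s := swap3 _
    _ = ∑ x, ∑ s, ∑ u, ∑ y, ∑ u', g x u y u' s := swap2 _
    _ = ∑ x, ∑ s, ∑ u, ∑ y, ∑ u', g x u y u' s := rfl
    _ = ∑ s, ∑ x, ∑ u, ∑ y, ∑ u', g x u y u' s := swap1 _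
    _ = ∑ s, ∑ u, ∑ x, ∑ y, ∑ u', g x u y u' s := swap2 _
    _ = ∑ u, ∑ s, ∑ x, ∑ y, ∑ u', g x u y u' s := swap1 _

variable {V : Matrix (ι × ι) (ι × ι) ℂ} {f : EuclideanSpace ℂ ι}

lemma fix1' (hff : mact V (tens f f) = tens f f) (p : ι × ι) :
    ∑ q, V p q * (f q.1 * f q.2) = f p.1 * f p.2 :=
  congrArg (fun v : EuclideanSpace ℂ (ι × ι) => v p) hff

lemma fix1 (hff : mact V (tens f f) = tens f f) (x u : ι) :
    ∑ y, ∑ w, V (x, u) (y, w) * (f y * f w) = f x * f u := by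
  have h := fix1' hff (x, u)
  rw [Fintype.sum_prod_type] at h
  exact h

lemma fixstar' (hV2 : V.conjTranspose * V = 1) (hff : mact V (tens f f) = tens f f)
    (s1 s2 : ι) :
    ∑ x, ∑ u, (𝕔 (f x) * 𝕔 (f u)) * V (x, u) (s1, s2) = 𝕔 (f s1) * 𝕔 (f s2) := by
  have h := starfix hV2 (fun r => f r.1 * f r.2) (fix1' hff) (s1, s2)
  have h2 := congrArg 𝕔 h
  rw [map_sum] at h2
  rw [Fintype.sum_prod_type] at h2
  simpa [map_mul, mul_comm] using h2

lemma L_idem (hV2 : V.conjTranspose * V = 1) (hP : Pentagon V)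
    (hff : mact V (tens f f) = tens f f) (hf1 : ∑ x, 𝕔 (f x) * f x = 1) :
    Lslice V f f * Lslice V f f = Lslice V f f := by
  ext a b
  rw [Matrix.mul_apply]
  unfold Lslice
  calc ∑ r, (∑ x, ∑ y, 𝕔 (f x) * f y * V (x, a) (y, r))
        * (∑ x, ∑ y, 𝕔 (f x) * f y * V (x, r) (y, b))
      = ∑ r, ∑ s2, ∑ u', ∑ s1, ∑ y,
          (𝕔 (f s1) * f y * V (s1, a) (y, r)) * (𝕔 (f s2) * f u' * V (s2, r) (u', b)) := by
        simp only [Finset.sum_mul, Finset.mul_sum]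
    _ = ∑ s2, ∑ r, ∑ s1, ∑ y, ∑ u',
          (𝕔 (f s1) * f y * V (s1, a) (y, r)) * (𝕔 (f s2) * f u' * V (s2, r) (u', b)) :=
        perm5A _
    _ = ∑ s2, ∑ r, ∑ s1, ∑ y, ∑ u',
          (𝕔 (f s1) * 𝕔 (f s2)) * ((f y * f u') * (V (s1, a) (y, r) * V (s2, r) (u', b))) := by
        refine Finset.sum_congr rfl fun s2 _ => Finset.sum_congr rfl fun r _ =>
          Finset.sum_congr rfl fun s1 _ => Finset.sum_congr rfl fun y _ =>
          Finset.sum_congr rfl fun u' _ => by ring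
    _ = ∑ s2, ∑ r, ∑ s1, ∑ y, ∑ u',
          (∑ x, ∑ u, (𝕔 (f x) * 𝕔 (f u)) * V (x, u) (s1, s2))
            * ((f y * f u') * (V (s1, a) (y, r) * V (s2, r) (u', b))) := by
        refine Finset.sum_congr rfl fun s2 _ => Finset.sum_congr rfl fun r _ =>
          Finset.sum_congr rfl fun s1 _ => ?_
        rw [fixstar' hV2 hff s1 s2]
    _ = ∑ s2, ∑ r, ∑ s1, ∑ y, ∑ u', ∑ x, ∑ u,
          ((𝕔 (f x) * 𝕔 (f u)) * V (x, u) (s1, s2))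
            * ((f y * f u') * (V (s1, a) (y, r) * V (s2, r) (u', b))) := by
        simp only [Finset.sum_mul]
    _ = ∑ x, ∑ u, ∑ y, ∑ u', ∑ s2, ∑ r, ∑ s1,
          ((𝕔 (f x) * 𝕔 (f u)) * V (x, u) (s1, s2))
            * ((f y * f u') * (V (s1, a) (y, r) * V (s2, r) (u', b))) := perm7A _
    _ = ∑ x, ∑ u, ∑ y, ∑ u',
          (𝕔 (f x) * 𝕔 (f u)) * ((f y * f u')
            * (∑ s2, ∑ r, (∑ s1, V (x, u) (s1, s2) * V (s1, a) (y, r)) * V (s2, r) (u', b))) := by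
        refine Finset.sum_congr rfl fun x _ => Finset.sum_congr rfl fun u _ =>
          Finset.sum_congr rfl fun y _ => Finset.sum_congr rfl fun u' _ => ?_
        simp only [Finset.mul_sum, Finset.sum_mul]
        refine Finset.sum_congr rfl fun s2 _ => Finset.sum_congr rfl fun r _ =>
          Finset.sum_congr rfl fun s1 _ => by ring
    _ = ∑ x, ∑ u, ∑ y, ∑ u',
          (𝕔 (f x) * 𝕔 (f u)) * ((f y * f u')
            * (∑ s, V (u, a) (s, b) * V (x, s) (y, u'))) := by
        refine Finset.sum_congr rfl fun x _ => Finset.sum_congr rfl fun u _ =>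
          Finset.sum_congr rfl fun y _ => Finset.sum_congr rfl fun u' _ => ?_
        rw [pent_entry hP]
    _ = ∑ x, ∑ u, ∑ y, ∑ u', ∑ s,
          (𝕔 (f u) * V (u, a) (s, b)) * (𝕔 (f x) * (V (x, s) (y, u') * (f y * f u'))) := by
        refine Finset.sum_congr rfl fun x _ => Finset.sum_congr rfl fun u _ =>
          Finset.sum_congr rfl fun y _ => Finset.sum_congr rfl fun u' _ => ?_
        simp only [Finset.mul_sum]
        refine Finset.sum_congr rfl fun s _ => by ring
    _ = ∑ u, ∑ s, ∑ x, ∑ y, ∑ u',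
          (𝕔 (f u) * V (u, a) (s, b)) * (𝕔 (f x) * (V (x, s) (y, u') * (f y * f u'))) :=
        perm5B _
    _ = ∑ u, ∑ s, (𝕔 (f u) * V (u, a) (s, b))
          * (∑ x, 𝕔 (f x) * (∑ y, ∑ u', V (x, s) (y, u') * (f y * f u'))) := by
        simp only [Finset.mul_sum]
    _ = ∑ u, ∑ s, (𝕔 (f u) * V (u, a) (s, b)) * (∑ x, 𝕔 (f x) * (f x * f s)) := by
        refine Finset.sum_congr rfl fun u _ => Finset.sum_congr rfl fun s _ => ?_
        rw [show (∑ x, 𝕔 (f x) * (∑ y, ∑ u', V (x, s) (y, u') * (f y * f u')))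
            = ∑ x, 𝕔 (f x) * (f x * f s) from
          Finset.sum_congr rfl fun x _ => by rw [fix1 hff x s]]
    _ = ∑ u, ∑ s, (𝕔 (f u) * V (u, a) (s, b)) * ((∑ x, 𝕔 (f x) * f x) * f s) := by
        refine Finset.sum_congr rfl fun u _ => Finset.sum_congr rfl fun s _ => ?_
        rw [Finset.sum_mul]
        simp only [mul_assoc]
    _ = ∑ x, ∑ y, 𝕔 (f x) * f y * V (x, a) (y, b) := by
        rw [hf1]
        refine Finset.sum_congr rfl fun u _ => Finset.sum_congr rfl fun s _ => by ring

lemma perm5C {M : Type*} [AddCommMonoid M] (g : ι → ι → ι → ι → ι → M) :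
    ∑ s1, ∑ xb, ∑ r, ∑ u, ∑ s2, g s1 xb r u s2
      = ∑ s2, ∑ r, ∑ s1, ∑ u, ∑ xb, g s1 xb r u s2 :=
  calc ∑ s1, ∑ xb, ∑ r, ∑ u, ∑ s2, g s1 xb r u s2
      = ∑ s1, ∑ xb, ∑ r, ∑ s2, ∑ u, g s1 xb r u s2 := sw5_4 _
    _ = ∑ s1, ∑ xb, ∑ s2, ∑ r, ∑ u, g s1 xb r u s2 := sw5_3 _
    _ = ∑ s1, ∑ s2, ∑ xb, ∑ r, ∑ u, g s1 xb r u s2 := sw5_2 _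
    _ = ∑ s2, ∑ s1, ∑ xb, ∑ r, ∑ u, g s1 xb r u s2 := sw5_1 _
    _ = ∑ s2, ∑ s1, ∑ r, ∑ xb, ∑ u, g s1 xb r u s2 := sw5_3 _
    _ = ∑ s2, ∑ r, ∑ s1, ∑ xb, ∑ u, g s1 xb r u s2 := sw5_2 _
    _ = ∑ s2, ∑ r, ∑ s1, ∑ u, ∑ xb, g s1 xb r u s2 := sw5_4 _

set_option maxHeartbeats 1000000 in
lemma perm7B {M : Type*} [AddCommMonoid M] (g : ι → ι → ι → ι → ι → ι → ι → M) :
    ∑ a1, ∑ a2, ∑ a3, ∑ a4, ∑ a5, ∑ a6, ∑ a7, g a1 a2 a3 a4 a5 a6 a7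
      = ∑ a4, ∑ a5, ∑ a6, ∑ a7, ∑ a1, ∑ a2, ∑ a3, g a1 a2 a3 a4 a5 a6 a7 := by
  have swap1 : ∀ (h : ι → ι → ι → ι → ι → ι → ι → M),
      (∑ a, ∑ b, ∑ c, ∑ d, ∑ e, ∑ i, ∑ j, h a b c d e i j)
        = ∑ b, ∑ a, ∑ c, ∑ d, ∑ e, ∑ i, ∑ j, h a b c d e i j := fun h => Finset.sum_comm
  have swap2 : ∀ (h : ι → ι → ι → ι → ι → ι → ι → M),
      (∑ a, ∑ b, ∑ c, ∑ d, ∑ e, ∑ i, ∑ j, h a b c d e i j)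
        = ∑ a, ∑ c, ∑ b, ∑ d, ∑ e, ∑ i, ∑ j, h a b c d e i j := fun h =>
    Finset.sum_congr rfl fun _ _ => Finset.sum_comm
  have swap3 : ∀ (h : ι → ι → ι → ι → ι → ι → ι → M),
      (∑ a, ∑ b, ∑ c, ∑ d, ∑ e, ∑ i, ∑ j, h a b c d e i j)
        = ∑ a, ∑ b, ∑ d, ∑ c, ∑ e, ∑ i, ∑ j, h a b c d e i j := fun h =>
    Finset.sum_congr rfl fun _ _ => Finset.sum_congr rfl fun _ _ => Finset.sum_comm
  have swap4 : ∀ (h : ι → ι → ι → ι → ι → ι → ι → M),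
      (∑ a, ∑ b, ∑ c, ∑ d, ∑ e, ∑ i, ∑ j, h a b c d e i j)
        = ∑ a, ∑ b, ∑ c, ∑ e, ∑ d, ∑ i, ∑ j, h a b c d e i j := fun h =>
    Finset.sum_congr rfl fun _ _ => Finset.sum_congr rfl fun _ _ =>
      Finset.sum_congr rfl fun _ _ => Finset.sum_comm
  have swap5 : ∀ (h : ι → ι → ι → ι → ι → ι → ι → M),
      (∑ a, ∑ b, ∑ c, ∑ d, ∑ e, ∑ i, ∑ j, h a b c d e i j)
        = ∑ a, ∑ b, ∑ c, ∑ d, ∑ i, ∑ e, ∑ j, h a b c d e i j := fun h =>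
    Finset.sum_congr rfl fun _ _ => Finset.sum_congr rfl fun _ _ =>
      Finset.sum_congr rfl fun _ _ => Finset.sum_congr rfl fun _ _ => Finset.sum_comm
  have swap6 : ∀ (h : ι → ι → ι → ι → ι → ι → ι → M),
      (∑ a, ∑ b, ∑ c, ∑ d, ∑ e, ∑ i, ∑ j, h a b c d e i j)
        = ∑ a, ∑ b, ∑ c, ∑ d, ∑ e, ∑ j, ∑ i, h a b c d e i j := fun h =>
    Finset.sum_congr rfl fun _ _ => Finset.sum_congr rfl fun _ _ =>
      Finset.sum_congr rfl fun _ _ => Finset.sum_congr rfl fun _ _ =>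
        Finset.sum_congr rfl fun _ _ => Finset.sum_comm
  calc ∑ a1, ∑ a2, ∑ a3, ∑ a4, ∑ a5, ∑ a6, ∑ a7, g a1 a2 a3 a4 a5 a6 a7
      = ∑ a1, ∑ a2, ∑ a4, ∑ a3, ∑ a5, ∑ a6, ∑ a7, g a1 a2 a3 a4 a5 a6 a7 := swap3 _
    _ = ∑ a1, ∑ a4, ∑ a2, ∑ a3, ∑ a5, ∑ a6, ∑ a7, g a1 a2 a3 a4 a5 a6 a7 := swap2 _
    _ = ∑ a4, ∑ a1, ∑ a2, ∑ a3, ∑ a5, ∑ a6, ∑ a7, g a1 a2 a3 a4 a5 a6 a7 := swap1 _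
    _ = ∑ a4, ∑ a1, ∑ a2, ∑ a5, ∑ a3, ∑ a6, ∑ a7, g a1 a2 a3 a4 a5 a6 a7 := swap4 _
    _ = ∑ a4, ∑ a1, ∑ a5, ∑ a2, ∑ a3, ∑ a6, ∑ a7, g a1 a2 a3 a4 a5 a6 a7 := swap3 _
    _ = ∑ a4, ∑ a5, ∑ a1, ∑ a2, ∑ a3, ∑ a6, ∑ a7, g a1 a2 a3 a4 a5 a6 a7 := swap2 _
    _ = ∑ a4, ∑ a5, ∑ a1, ∑ a2, ∑ a6, ∑ a3, ∑ a7, g a1 a2 a3 a4 a5 a6 a7 := swap5 _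
    _ = ∑ a4, ∑ a5, ∑ a1, ∑ a6, ∑ a2, ∑ a3, ∑ a7, g a1 a2 a3 a4 a5 a6 a7 := swap4 _
    _ = ∑ a4, ∑ a5, ∑ a6, ∑ a1, ∑ a2, ∑ a3, ∑ a7, g a1 a2 a3 a4 a5 a6 a7 := swap3 _
    _ = ∑ a4, ∑ a5, ∑ a6, ∑ a1, ∑ a2, ∑ a7, ∑ a3, g a1 a2 a3 a4 a5 a6 a7 := swap6 _
    _ = ∑ a4, ∑ a5, ∑ a6, ∑ a1, ∑ a7, ∑ a2, ∑ a3, g a1 a2 a3 a4 a5 a6 a7 := swap5 _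
    _ = ∑ a4, ∑ a5, ∑ a6, ∑ a7, ∑ a1, ∑ a2, ∑ a3, g a1 a2 a3 a4 a5 a6 a7 := swap4 _

lemma perm5D {M : Type*} [AddCommMonoid M] (g : ι → ι → ι → ι → ι → M) :
    ∑ u, ∑ xb, ∑ u', ∑ b', ∑ s, g u xb u' b' s
      = ∑ s, ∑ u', ∑ b', ∑ u, ∑ xb, g u xb u' b' s :=
  calc ∑ u, ∑ xb, ∑ u', ∑ b', ∑ s, g u xb u' b' s
      = ∑ u, ∑ xb, ∑ u', ∑ s, ∑ b', g u xb u' b' s := sw5_4 _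
    _ = ∑ u, ∑ xb, ∑ s, ∑ u', ∑ b', g u xb u' b' s := sw5_3 _
    _ = ∑ u, ∑ s, ∑ xb, ∑ u', ∑ b', g u xb u' b' s := sw5_2 _
    _ = ∑ s, ∑ u, ∑ xb, ∑ u', ∑ b', g u xb u' b' s := sw5_1 _
    _ = ∑ s, ∑ u, ∑ u', ∑ xb, ∑ b', g u xb u' b' s := sw5_3 _
    _ = ∑ s, ∑ u', ∑ u, ∑ xb, ∑ b', g u xb u' b' s := sw5_2 _
    _ = ∑ s, ∑ u', ∑ u, ∑ b', ∑ xb, g u xb u' b' s := sw5_4 _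
    _ = ∑ s, ∑ u', ∑ b', ∑ u, ∑ xb, g u xb u' b' s := sw5_3 _

lemma R_idem (hV2 : V.conjTranspose * V = 1) (hP : Pentagon V)
    (hff : mact V (tens f f) = tens f f) (hf1 : ∑ x, 𝕔 (f x) * f x = 1) :
    Rslice V f f * Rslice V f f = Rslice V f f := by
  ext a b
  rw [Matrix.mul_apply]
  unfold Rslice
  calc ∑ t, (∑ x, ∑ y, 𝕔 (f x) * f y * V (a, x) (t, y))
        * (∑ x, ∑ y, 𝕔 (f x) * f y * V (t, x) (b, y))
      = ∑ t, ∑ xb, ∑ r, ∑ u, ∑ s2,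
          (𝕔 (f u) * f s2 * V (a, u) (t, s2)) * (𝕔 (f xb) * f r * V (t, xb) (b, r)) := by
        simp only [Finset.sum_mul, Finset.mul_sum]
    _ = ∑ s2, ∑ r, ∑ t, ∑ u, ∑ xb,
          (𝕔 (f u) * f s2 * V (a, u) (t, s2)) * (𝕔 (f xb) * f r * V (t, xb) (b, r)) :=
        perm5C _
    _ = ∑ s2, ∑ r, ∑ t, ∑ u, ∑ xb,
          (𝕔 (f u) * 𝕔 (f xb)) * ((f s2 * f r) * (V (a, u) (t, s2) * V (t, xb) (b, r))) := by
        refine Finset.sum_congr rfl fun s2 _ => Finset.sum_congr rfl fun r _ =>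
          Finset.sum_congr rfl fun t _ => Finset.sum_congr rfl fun u _ =>
          Finset.sum_congr rfl fun xb _ => by ring
    _ = ∑ s2, ∑ r, ∑ t, ∑ u, ∑ xb,
          (𝕔 (f u) * 𝕔 (f xb)) * ((∑ u', ∑ b', V (s2, r) (u', b') * (f u' * f b'))
            * (V (a, u) (t, s2) * V (t, xb) (b, r))) := by
        refine Finset.sum_congr rfl fun s2 _ => Finset.sum_congr rfl fun r _ => ?_
        rw [fix1 hff s2 r]
    _ = ∑ s2, ∑ r, ∑ t, ∑ u, ∑ xb, ∑ u', ∑ b',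
          (𝕔 (f u) * 𝕔 (f xb)) * ((f u' * f b')
            * ((V (a, u) (t, s2) * V (t, xb) (b, r)) * V (s2, r) (u', b'))) := by
        refine Finset.sum_congr rfl fun s2 _ => Finset.sum_congr rfl fun r _ =>
          Finset.sum_congr rfl fun t _ => Finset.sum_congr rfl fun u _ =>
          Finset.sum_congr rfl fun xb _ => ?_
        simp only [Finset.mul_sum, Finset.sum_mul]
        refine Finset.sum_congr rfl fun u' _ => Finset.sum_congr rfl fun b' _ => by ring
    _ = ∑ u, ∑ xb, ∑ u', ∑ b', ∑ s2, ∑ r, ∑ t,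
          (𝕔 (f u) * 𝕔 (f xb)) * ((f u' * f b')
            * ((V (a, u) (t, s2) * V (t, xb) (b, r)) * V (s2, r) (u', b'))) := by
        have := perm7B (fun s2 r t u xb u' b' =>
          (𝕔 (f u) * 𝕔 (f xb)) * ((f u' * f b')
            * ((V (a, u) (t, s2) * V (t, xb) (b, r)) * V (s2, r) (u', b'))))
        exact this
    _ = ∑ u, ∑ xb, ∑ u', ∑ b',
          (𝕔 (f u) * 𝕔 (f xb)) * ((f u' * f b')
            * (∑ s2, ∑ r, (∑ t, V (a, u) (t, s2) * V (t, xb) (b, r)) * V (s2, r) (u', b'))) := by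
        refine Finset.sum_congr rfl fun u _ => Finset.sum_congr rfl fun xb _ =>
          Finset.sum_congr rfl fun u' _ => Finset.sum_congr rfl fun b' _ => ?_
        simp only [Finset.mul_sum, Finset.sum_mul]
        try refine Finset.sum_congr rfl fun s2 _ => Finset.sum_congr rfl fun r _ =>
          Finset.sum_congr rfl fun t _ => by ring
    _ = ∑ u, ∑ xb, ∑ u', ∑ b',
          (𝕔 (f u) * 𝕔 (f xb)) * ((f u' * f b')
            * (∑ s, V (u, xb) (s, b') * V (a, s) (b, u'))) := by
        refine Finset.sum_congr rfl fun u _ => Finset.sum_congr rfl fun xb _ =>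
          Finset.sum_congr rfl fun u' _ => Finset.sum_congr rfl fun b' _ => ?_
        rw [pent_entry hP]
    _ = ∑ u, ∑ xb, ∑ u', ∑ b', ∑ s,
          ((𝕔 (f u) * 𝕔 (f xb)) * V (u, xb) (s, b'))
            * ((f u' * V (a, s) (b, u')) * f b') := by
        refine Finset.sum_congr rfl fun u _ => Finset.sum_congr rfl fun xb _ =>
          Finset.sum_congr rfl fun u' _ => Finset.sum_congr rfl fun b' _ => ?_
        simp only [Finset.mul_sum]
        refine Finset.sum_congr rfl fun s _ => by ring
    _ = ∑ s, ∑ u', ∑ b', ∑ u, ∑ xb,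
          ((𝕔 (f u) * 𝕔 (f xb)) * V (u, xb) (s, b'))
            * ((f u' * V (a, s) (b, u')) * f b') := perm5D _
    _ = ∑ s, ∑ u', (f u' * V (a, s) (b, u'))
          * (∑ b', (∑ u, ∑ xb, (𝕔 (f u) * 𝕔 (f xb)) * V (u, xb) (s, b')) * f b') := by
        refine Finset.sum_congr rfl fun s _ => Finset.sum_congr rfl fun u' _ => ?_
        simp only [Finset.mul_sum, Finset.sum_mul]
        refine Finset.sum_congr rfl fun b' _ => Finset.sum_congr rfl fun u _ =>
          Finset.sum_congr rfl fun xb _ => by ring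
    _ = ∑ s, ∑ u', (f u' * V (a, s) (b, u')) * (∑ b', (𝕔 (f s) * 𝕔 (f b')) * f b') := by
        refine Finset.sum_congr rfl fun s _ => Finset.sum_congr rfl fun u' _ => ?_
        rw [show (∑ b', (∑ u, ∑ xb, (𝕔 (f u) * 𝕔 (f xb)) * V (u, xb) (s, b')) * f b')
            = ∑ b', (𝕔 (f s) * 𝕔 (f b')) * f b' from
          Finset.sum_congr rfl fun b' _ => by rw [fixstar' hV2 hff s b']]
    _ = ∑ s, ∑ u', (f u' * V (a, s) (b, u')) * (𝕔 (f s) * ∑ b', 𝕔 (f b') * f b') := by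
        refine Finset.sum_congr rfl fun s _ => Finset.sum_congr rfl fun u' _ => ?_
        simp only [Finset.mul_sum]
        exact Finset.sum_congr rfl fun b' _ => by ring
    _ = ∑ x, ∑ y, 𝕔 (f x) * f y * V (a, x) (b, y) := by
        rw [hf1]
        refine Finset.sum_congr rfl fun s _ => Finset.sum_congr rfl fun u' _ => by ring

lemma perm5F {M : Type*} [AddCommMonoid M] (g : ι → ι → ι → ι → ι → M) :
    ∑ s, ∑ b', ∑ u', ∑ x, ∑ y, g s b' u' x y
      = ∑ x, ∑ y, ∑ u', ∑ b', ∑ s, g s b' u' x y :=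
  calc ∑ s, ∑ b', ∑ u', ∑ x, ∑ y, g s b' u' x y
      = ∑ s, ∑ b', ∑ x, ∑ u', ∑ y, g s b' u' x y := sw5_3 _
    _ = ∑ s, ∑ x, ∑ b', ∑ u', ∑ y, g s b' u' x y := sw5_2 _
    _ = ∑ x, ∑ s, ∑ b', ∑ u', ∑ y, g s b' u' x y := sw5_1 _
    _ = ∑ x, ∑ s, ∑ b', ∑ y, ∑ u', g s b' u' x y := sw5_4 _
    _ = ∑ x, ∑ s, ∑ y, ∑ b', ∑ u', g s b' u' x y := sw5_3 _
    _ = ∑ x, ∑ y, ∑ s, ∑ b', ∑ u', g s b' u' x y := sw5_2 _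
    _ = ∑ x, ∑ y, ∑ b', ∑ s, ∑ u', g s b' u' x y := sw5_3 _
    _ = ∑ x, ∑ y, ∑ b', ∑ u', ∑ s, g s b' u' x y := sw5_4 _
    _ = ∑ x, ∑ y, ∑ u', ∑ b', ∑ s, g s b' u' x y := sw5_3 _

lemma perm5G {M : Type*} [AddCommMonoid M] (g : ι → ι → ι → ι → ι → M) :
    ∑ s2, ∑ r, ∑ s1, ∑ x, ∑ y, g s2 r s1 x y
      = ∑ s1, ∑ y, ∑ r, ∑ x, ∑ s2, g s2 r s1 x y :=
  calc ∑ s2, ∑ r, ∑ s1, ∑ x, ∑ y, g s2 r s1 x y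
      = ∑ s2, ∑ s1, ∑ r, ∑ x, ∑ y, g s2 r s1 x y := sw5_2 _
    _ = ∑ s1, ∑ s2, ∑ r, ∑ x, ∑ y, g s2 r s1 x y := sw5_1 _
    _ = ∑ s1, ∑ s2, ∑ r, ∑ y, ∑ x, g s2 r s1 x y := sw5_4 _
    _ = ∑ s1, ∑ s2, ∑ y, ∑ r, ∑ x, g s2 r s1 x y := sw5_3 _
    _ = ∑ s1, ∑ y, ∑ s2, ∑ r, ∑ x, g s2 r s1 x y := sw5_2 _
    _ = ∑ s1, ∑ y, ∑ r, ∑ s2, ∑ x, g s2 r s1 x y := sw5_3 _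
    _ = ∑ s1, ∑ y, ∑ r, ∑ x, ∑ s2, g s2 r s1 x y := sw5_4 _

lemma perm3A {M : Type*} [AddCommMonoid M] (g : ι → ι → ι → M) :
    ∑ s1, ∑ x, ∑ s2, g s1 x s2 = ∑ s2, ∑ x, ∑ s1, g s1 x s2 :=
  calc ∑ s1, ∑ x, ∑ s2, g s1 x s2
      = ∑ s1, ∑ s2, ∑ x, g s1 x s2 :=
        Finset.sum_congr rfl fun _ _ => Finset.sum_comm
    _ = ∑ s2, ∑ s1, ∑ x, g s1 x s2 := Finset.sum_comm
    _ = ∑ s2, ∑ x, ∑ s1, g s1 x s2 :=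
        Finset.sum_congr rfl fun _ _ => Finset.sum_comm

set_option maxHeartbeats 1000000 in
lemma L_inv (hP : Pentagon V) (hff : mact V (tens f f) = tens f f)
    {ζ : EuclideanSpace ℂ ι} (hζ : mact V (tens ζ f) = tens ζ f) :
    mact V (tens (appM (Lslice V f f) ζ) f) = tens (appM (Lslice V f f) ζ) f := by
  have hζ1 : ∀ s2 r : ι, ∑ u', ∑ b', V (s2, r) (u', b') * (ζ u' * f b') = ζ s2 * f r := by
    intro s2 r
    have h : ∑ q, V (s2, r) q * (ζ q.1 * f q.2) = ζ s2 * f r := congrArg (fun v : EuclideanSpace ℂ (ι × ι) => v (s2, r)) hζ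
    rw [Fintype.sum_prod_type] at h
    exact h
  set w := appM (Lslice V f f) ζ with hw
  ext p
  obtain ⟨u, b⟩ := p
  show ∑ q, V (u, b) q * (w q.1 * f q.2) = w u * f b
  calc ∑ q, V (u, b) q * (w q.1 * f q.2)
      = ∑ s, ∑ b', V (u, b) (s, b') * (w s * f b') := by rw [Fintype.sum_prod_type]
    _ = ∑ s, ∑ b', V (u, b) (s, b')
          * ((∑ u', (∑ x, ∑ y, 𝕔 (f x) * f y * V (x, s) (y, u')) * ζ u') * f b') := rfl
    _ = ∑ s, ∑ b', ∑ u', ∑ x, ∑ y, V (u, b) (s, b')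
          * ((((𝕔 (f x) * f y * V (x, s) (y, u')) * ζ u') * f b')) := by
        simp only [Finset.mul_sum, Finset.sum_mul]
    _ = ∑ x, ∑ y, ∑ u', ∑ b', ∑ s, V (u, b) (s, b')
          * ((((𝕔 (f x) * f y * V (x, s) (y, u')) * ζ u') * f b')) := perm5F _
    _ = ∑ x, ∑ y, ∑ u', ∑ b', 𝕔 (f x) * ((f y * (ζ u' * f b'))
          * (∑ s, V (u, b) (s, b') * V (x, s) (y, u'))) := by
        refine Finset.sum_congr rfl fun x _ => Finset.sum_congr rfl fun y _ =>
          Finset.sum_congr rfl fun u' _ => Finset.sum_congr rfl fun b' _ => ?_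
        simp only [Finset.mul_sum]
        exact Finset.sum_congr rfl fun s _ => by ring
    _ = ∑ x, ∑ y, ∑ u', ∑ b', 𝕔 (f x) * ((f y * (ζ u' * f b'))
          * (∑ s2, ∑ r, (∑ s1, V (x, u) (s1, s2) * V (s1, b) (y, r)) * V (s2, r) (u', b'))) := by
        refine Finset.sum_congr rfl fun x _ => Finset.sum_congr rfl fun y _ =>
          Finset.sum_congr rfl fun u' _ => Finset.sum_congr rfl fun b' _ => ?_
        rw [pent_entry hP x u b y u' b']
    _ = ∑ x, ∑ y, ∑ u', ∑ b', ∑ s2, ∑ r, ∑ s1,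
          (𝕔 (f x) * V (x, u) (s1, s2)) * (((f y * V (s1, b) (y, r)))
            * (V (s2, r) (u', b') * (ζ u' * f b'))) := by
        refine Finset.sum_congr rfl fun x _ => Finset.sum_congr rfl fun y _ =>
          Finset.sum_congr rfl fun u' _ => Finset.sum_congr rfl fun b' _ => ?_
        simp only [Finset.mul_sum, Finset.sum_mul]
        refine Finset.sum_congr rfl fun s2 _ => Finset.sum_congr rfl fun r _ =>
          Finset.sum_congr rfl fun s1 _ => by ring
    _ = ∑ s2, ∑ r, ∑ s1, ∑ x, ∑ y, ∑ u', ∑ b',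
          (𝕔 (f x) * V (x, u) (s1, s2)) * (((f y * V (s1, b) (y, r)))
            * (V (s2, r) (u', b') * (ζ u' * f b'))) := (perm7B _).symm
    _ = ∑ s2, ∑ r, ∑ s1, ∑ x, ∑ y,
          (𝕔 (f x) * V (x, u) (s1, s2)) * (((f y * V (s1, b) (y, r)))
            * (∑ u', ∑ b', V (s2, r) (u', b') * (ζ u' * f b'))) := by
        refine Finset.sum_congr rfl fun s2 _ => Finset.sum_congr rfl fun r _ =>
          Finset.sum_congr rfl fun s1 _ => Finset.sum_congr rfl fun x _ =>
          Finset.sum_congr rfl fun y _ => ?_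
        simp only [Finset.mul_sum]
    _ = ∑ s2, ∑ r, ∑ s1, ∑ x, ∑ y,
          (𝕔 (f x) * V (x, u) (s1, s2)) * (((f y * V (s1, b) (y, r))) * (ζ s2 * f r)) := by
        refine Finset.sum_congr rfl fun s2 _ => Finset.sum_congr rfl fun r _ => ?_
        rw [hζ1 s2 r]
    _ = ∑ s1, ∑ y, ∑ r, ∑ x, ∑ s2,
          (𝕔 (f x) * V (x, u) (s1, s2)) * (((f y * V (s1, b) (y, r))) * (ζ s2 * f r)) :=
        perm5G _
    _ = ∑ s1, (∑ x, ∑ s2, (𝕔 (f x) * ζ s2) * V (x, u) (s1, s2))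
          * (∑ y, ∑ r, V (s1, b) (y, r) * (f y * f r)) := by
        refine Finset.sum_congr rfl fun s1 _ => ?_
        simp only [Finset.mul_sum, Finset.sum_mul]
        refine Finset.sum_congr rfl fun y _ => Finset.sum_congr rfl fun r _ =>
          Finset.sum_congr rfl fun x _ => Finset.sum_congr rfl fun s2 _ => by ring
    _ = ∑ s1, (∑ x, ∑ s2, (𝕔 (f x) * ζ s2) * V (x, u) (s1, s2)) * (f s1 * f b) := by
        refine Finset.sum_congr rfl fun s1 _ => ?_
        rw [fix1 hff s1 b]
    _ = ∑ s1, ∑ x, ∑ s2, ((𝕔 (f x) * f s1 * V (x, u) (s1, s2)) * ζ s2) * f b := by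
        refine Finset.sum_congr rfl fun s1 _ => ?_
        simp only [Finset.sum_mul]
        refine Finset.sum_congr rfl fun x _ => Finset.sum_congr rfl fun s2 _ => by ring
    _ = ∑ s2, ∑ x, ∑ s1, ((𝕔 (f x) * f s1 * V (x, u) (s1, s2)) * ζ s2) * f b := perm3A _
    _ = (∑ s2, (∑ x, ∑ s1, 𝕔 (f x) * f s1 * V (x, u) (s1, s2)) * ζ s2) * f b := by
        simp only [Finset.sum_mul]
    _ = w u * f b := by
        rw [hw]
        show _ = (∑ s2, (∑ x', ∑ y', 𝕔 (f x') * f y' * V (x', u) (y', s2)) * ζ s2) * f b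
        rfl

lemma perm3B {α β γ M : Type*} [Fintype α] [Fintype β] [Fintype γ] [AddCommMonoid M]
    (g : α → β → γ → M) :
    ∑ p, ∑ q, ∑ r, g p q r = ∑ q, ∑ r, ∑ p, g p q r :=
  calc ∑ p, ∑ q, ∑ r, g p q r
      = ∑ q, ∑ p, ∑ r, g p q r := Finset.sum_comm
    _ = ∑ q, ∑ r, ∑ p, g p q r := Finset.sum_congr rfl fun _ _ => Finset.sum_comm

lemma nrm_one {f : EuclideanSpace ℂ ι} (hf : ‖f‖ = 1) : ∑ x, 𝕔 (f x) * f x = 1 := by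
  have h : ⟪f, f⟫_ℂ = 1 := by
    rw [inner_self_eq_norm_sq_to_K, hf]
    norm_num
  rw [PiLp.inner_apply] at h
  simpa [RCLike.inner_apply, Complex.conj_mul'] using h

lemma vfix (hV2 : V.conjTranspose * V = 1) (g : EuclideanSpace ℂ (ι × ι))
    (hg : ∑ p, 𝕔 (g p) * (∑ q, V p q * g q) = ∑ p, 𝕔 (g p) * g p) :
    appM V g = g := by
  have hT1 : ∑ p, 𝕔 (appM V g p) * appM V g p = ∑ p, 𝕔 (g p) * g p := by
    calc ∑ p, 𝕔 (appM V g p) * appM V g p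
        = ∑ p, (∑ q, 𝕔 (V p q) * 𝕔 (g q)) * (∑ r, V p r * g r) := by
          simp only [appM, map_sum, map_mul]
      _ = ∑ p, ∑ r, ∑ q, (𝕔 (V p q) * 𝕔 (g q)) * (V p r * g r) := by
          simp only [Finset.sum_mul, Finset.mul_sum]
      _ = ∑ p, ∑ q, ∑ r, (𝕔 (V p q) * 𝕔 (g q)) * (V p r * g r) :=
          Finset.sum_congr rfl fun _ _ => Finset.sum_comm
      _ = ∑ q, ∑ r, ∑ p, (𝕔 (V p q) * 𝕔 (g q)) * (V p r * g r) := perm3B _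
      _ = ∑ q, ∑ r, (𝕔 (g q) * g r) * (∑ p, 𝕔 (V p q) * V p r) := by
          refine Finset.sum_congr rfl fun q _ => Finset.sum_congr rfl fun r _ => ?_
          simp only [Finset.sum_mul, Finset.mul_sum]
          exact Finset.sum_congr rfl fun p _ => by ring
      _ = ∑ q, ∑ r, (𝕔 (g q) * g r) * (if q = r then 1 else 0) := by
          refine Finset.sum_congr rfl fun q _ => Finset.sum_congr rfl fun r _ => ?_
          rw [unit_col hV2]
      _ = ∑ p, 𝕔 (g p) * g p := by
          simp [mul_ite, mul_one, mul_zero, Finset.sum_ite_eq]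
  have hT2 : ∑ p, 𝕔 (appM V g p) * g p = ∑ p, 𝕔 (g p) * g p := by
    have h := congrArg 𝕔 hg
    rw [map_sum, map_sum] at h
    simp only [map_mul, Complex.conj_conj] at h
    calc ∑ p, 𝕔 (appM V g p) * g p
        = ∑ p, g p * 𝕔 (appM V g p) := Finset.sum_congr rfl fun p _ => by ring
      _ = ∑ p, g p * 𝕔 (g p) := by
          have h2 : ∀ p, 𝕔 ((∑ q, V p q * g q)) = 𝕔 (appM V g p) := fun p => rfl
          simp only [h2] at h
          exact h
      _ = ∑ p, 𝕔 (g p) * g p := Finset.sum_congr rfl fun p _ => by ring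
  have key : ∑ p, (Complex.normSq (appM V g p - g p) : ℂ) = 0 := by
    have expand : ∀ p : ι × ι, (Complex.normSq (appM V g p - g p) : ℂ)
        = (𝕔 (appM V g p) * appM V g p - 𝕔 (appM V g p) * g p)
          - (𝕔 (g p) * appM V g p - 𝕔 (g p) * g p) := by
      intro p
      rw [Complex.normSq_eq_conj_mul_self, map_sub]
      ring
    have hT3 : ∑ p, 𝕔 (g p) * appM V g p = ∑ p, 𝕔 (g p) * g p := hg
    rw [Finset.sum_congr rfl fun p _ => expand p, Finset.sum_sub_distrib,
      Finset.sum_sub_distrib, Finset.sum_sub_distrib, hT1, hT2, hT3]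
    ring
  have key2 : ∑ p, Complex.normSq (appM V g p - g p) = 0 := by
    have := congrArg Complex.re key
    simpa using this
  have hz := (Finset.sum_eq_zero_iff_of_nonneg
    (fun p _ => Complex.normSq_nonneg (appM V g p - g p))).mp key2
  ext p
  have := Complex.normSq_eq_zero.mp (hz p (Finset.mem_univ p))
  exact sub_eq_zero.mp this

lemma perm4A {M : Type*} [AddCommMonoid M] (g : ι → ι → ι → ι → M) :
    ∑ x, ∑ a, ∑ y, ∑ b, g x a y b = ∑ a, ∑ b, ∑ x, ∑ y, g x a y b :=
  calc ∑ x, ∑ a, ∑ y, ∑ b, g x a y b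
      = ∑ a, ∑ x, ∑ y, ∑ b, g x a y b := sw4_1 _
    _ = ∑ a, ∑ x, ∑ b, ∑ y, g x a y b := sw4_3 _
    _ = ∑ a, ∑ b, ∑ x, ∑ y, g x a y b := sw4_2 _

/-- if `u` is fixed by `L(ω_ff)` then `f ⊗ u` is fixed by `V`. -/
lemma mem_up_of_Lfixed (hV2 : V.conjTranspose * V = 1)
    (hf1 : ∑ x, 𝕔 (f x) * f x = 1) {u : EuclideanSpace ℂ ι}
    (hu : appM (Lslice V f f) u = u) :
    appM V (tens f u) = tens f u := by
  apply vfix hV2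
  calc ∑ p, 𝕔 (tens f u p) * (∑ q, V p q * tens f u q)
      = ∑ x, ∑ a, 𝕔 (f x * u a) * (∑ y, ∑ b, V (x, a) (y, b) * (f y * u b)) := by
        rw [Fintype.sum_prod_type]
        refine Finset.sum_congr rfl fun x _ => Finset.sum_congr rfl fun a _ => ?_
        rw [Fintype.sum_prod_type]
        rfl
    _ = ∑ x, ∑ a, ∑ y, ∑ b,
          (𝕔 (f x) * 𝕔 (u a)) * (V (x, a) (y, b) * (f y * u b)) := by
        refine Finset.sum_congr rfl fun x _ => Finset.sum_congr rfl fun a _ => ?_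
        rw [map_mul, Finset.mul_sum]
        refine Finset.sum_congr rfl fun y _ => ?_
        rw [Finset.mul_sum]
    _ = ∑ a, ∑ b, ∑ x, ∑ y,
          (𝕔 (f x) * 𝕔 (u a)) * (V (x, a) (y, b) * (f y * u b)) := perm4A _
    _ = ∑ a, 𝕔 (u a) * (∑ b, (∑ x, ∑ y, 𝕔 (f x) * f y * V (x, a) (y, b)) * u b) := by
        refine Finset.sum_congr rfl fun a _ => ?_
        simp only [Finset.mul_sum, Finset.sum_mul]
        refine Finset.sum_congr rfl fun b _ => Finset.sum_congr rfl fun x _ =>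
          Finset.sum_congr rfl fun y _ => by ring
    _ = ∑ a, 𝕔 (u a) * u a := by
        refine Finset.sum_congr rfl fun a _ => ?_
        rw [show (∑ b, (∑ x, ∑ y, 𝕔 (f x) * f y * V (x, a) (y, b)) * u b) = u a from by
          rw [show (∑ b, (∑ x, ∑ y, 𝕔 (f x) * f y * V (x, a) (y, b)) * u b)
              = appM (Lslice V f f) u a from rfl, hu]]
    _ = (∑ x, 𝕔 (f x) * f x) * (∑ a, 𝕔 (u a) * u a) := by rw [hf1, one_mul]
    _ = ∑ x, ∑ a, (𝕔 (f x) * f x) * (𝕔 (u a) * u a) := by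
        rw [Finset.sum_mul_sum]
    _ = ∑ p : ι × ι, 𝕔 (tens f u p) * tens f u p := by
        rw [Fintype.sum_prod_type]
        refine Finset.sum_congr rfl fun x _ => Finset.sum_congr rfl fun a _ => ?_
        show (𝕔 (f x) * f x) * (𝕔 (u a) * u a) = 𝕔 (f x * u a) * (f x * u a)
        rw [map_mul]; ring

/-- if `u` is fixed by `ρ(ω_ff)` then `u ⊗ f` is fixed by `V`. -/
lemma mem_down_of_Rfixed (hV2 : V.conjTranspose * V = 1)
    (hf1 : ∑ x, 𝕔 (f x) * f x = 1) {u : EuclideanSpace ℂ ι}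
    (hu : appM (Rslice V f f) u = u) :
    appM V (tens u f) = tens u f := by
  apply vfix hV2
  calc ∑ p, 𝕔 (tens u f p) * (∑ q, V p q * tens u f q)
      = ∑ a, ∑ x, 𝕔 (u a * f x) * (∑ b, ∑ y, V (a, x) (b, y) * (u b * f y)) := by
        rw [Fintype.sum_prod_type]
        refine Finset.sum_congr rfl fun a _ => Finset.sum_congr rfl fun x _ => ?_
        rw [Fintype.sum_prod_type]
        rfl
    _ = ∑ a, ∑ x, ∑ b, ∑ y,
          (𝕔 (u a) * 𝕔 (f x)) * (V (a, x) (b, y) * (u b * f y)) := by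
        refine Finset.sum_congr rfl fun a _ => Finset.sum_congr rfl fun x _ => ?_
        rw [map_mul, Finset.mul_sum]
        refine Finset.sum_congr rfl fun b _ => ?_
        rw [Finset.mul_sum]
    _ = ∑ a, ∑ b, ∑ x, ∑ y,
          (𝕔 (u a) * 𝕔 (f x)) * (V (a, x) (b, y) * (u b * f y)) := sw4_2 _
    _ = ∑ a, 𝕔 (u a) * (∑ b, (∑ x, ∑ y, 𝕔 (f x) * f y * V (a, x) (b, y)) * u b) := by
        refine Finset.sum_congr rfl fun a _ => ?_
        simp only [Finset.mul_sum, Finset.sum_mul]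
        refine Finset.sum_congr rfl fun b _ => Finset.sum_congr rfl fun x _ =>
          Finset.sum_congr rfl fun y _ => by ring
    _ = ∑ a, 𝕔 (u a) * u a := by
        refine Finset.sum_congr rfl fun a _ => ?_
        rw [show (∑ b, (∑ x, ∑ y, 𝕔 (f x) * f y * V (a, x) (b, y)) * u b) = u a from by
          rw [show (∑ b, (∑ x, ∑ y, 𝕔 (f x) * f y * V (a, x) (b, y)) * u b)
              = appM (Rslice V f f) u a from rfl, hu]]
    _ = (∑ a, 𝕔 (u a) * u a) * (∑ x, 𝕔 (f x) * f x) := by rw [hf1, mul_one]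
    _ = ∑ a, ∑ x, (𝕔 (u a) * u a) * (𝕔 (f x) * f x) := by
        rw [Finset.sum_mul_sum]
    _ = ∑ p : ι × ι, 𝕔 (tens u f p) * tens u f p := by
        rw [Fintype.sum_prod_type]
        refine Finset.sum_congr rfl fun a _ => Finset.sum_congr rfl fun x _ => ?_
        show (𝕔 (u a) * u a) * (𝕔 (f x) * f x) = 𝕔 (u a * f x) * (u a * f x)
        rw [map_mul]; ring

lemma perm4B {M : Type*} [AddCommMonoid M] (g : ι → ι → ι → ι → M) :
    ∑ a, ∑ b, ∑ x, ∑ y, g a b x y = ∑ y, ∑ b, ∑ x, ∑ a, g a b x y :=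
  calc ∑ a, ∑ b, ∑ x, ∑ y, g a b x y
      = ∑ a, ∑ b, ∑ y, ∑ x, g a b x y := sw4_3 _
    _ = ∑ a, ∑ y, ∑ b, ∑ x, g a b x y := sw4_2 _
    _ = ∑ y, ∑ a, ∑ b, ∑ x, g a b x y := sw4_1 _
    _ = ∑ y, ∑ b, ∑ a, ∑ x, g a b x y := sw4_2 _
    _ = ∑ y, ∑ b, ∑ x, ∑ a, g a b x y := sw4_3 _

/-- `⟨L v, w⟩ = ⟨v, w⟩` when `f ⊗ w` is fixed by `V*`. -/
lemma innerL (hf1 : ∑ x, 𝕔 (f x) * f x = 1) {w : EuclideanSpace ℂ ι}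
    (hw : ∀ y b, ∑ x, ∑ a, 𝕔 (V (x, a) (y, b)) * (f x * w a) = f y * w b)
    (v : EuclideanSpace ℂ ι) :
    ∑ a, 𝕔 (appM (Lslice V f f) v a) * w a = ∑ b, 𝕔 (v b) * w b := by
  calc ∑ a, 𝕔 (appM (Lslice V f f) v a) * w a
      = ∑ a, (∑ b, (∑ x, ∑ y, (f x * 𝕔 (f y)) * 𝕔 (V (x, a) (y, b))) * 𝕔 (v b)) * w a := by
        refine Finset.sum_congr rfl fun a _ => ?_
        show 𝕔 (∑ b, Lslice V f f a b * v b) * w a = _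
        rw [map_sum]
        refine congrArg (· * w a) (Finset.sum_congr rfl fun b _ => ?_)
        rw [map_mul]
        refine congrArg (· * 𝕔 (v b)) ?_
        show 𝕔 (∑ x, ∑ y, 𝕔 (f x) * f y * V (x, a) (y, b)) = _
        simp only [map_sum, map_mul, Complex.conj_conj]
    _ = ∑ a, ∑ b, ∑ x, ∑ y,
          ((f x * 𝕔 (f y)) * 𝕔 (V (x, a) (y, b)) * 𝕔 (v b)) * w a := by
        simp only [Finset.sum_mul]
    _ = ∑ y, ∑ b, ∑ x, ∑ a,
          ((f x * 𝕔 (f y)) * 𝕔 (V (x, a) (y, b)) * 𝕔 (v b)) * w a := perm4B _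
    _ = ∑ y, ∑ b, (𝕔 (f y) * 𝕔 (v b)) * (∑ x, ∑ a, 𝕔 (V (x, a) (y, b)) * (f x * w a)) := by
        refine Finset.sum_congr rfl fun y _ => Finset.sum_congr rfl fun b _ => ?_
        simp only [Finset.mul_sum]
        refine Finset.sum_congr rfl fun x _ => Finset.sum_congr rfl fun a _ => by ring
    _ = ∑ y, ∑ b, (𝕔 (f y) * 𝕔 (v b)) * (f y * w b) := by
        refine Finset.sum_congr rfl fun y _ => Finset.sum_congr rfl fun b _ => ?_
        rw [hw y b]
    _ = (∑ y, 𝕔 (f y) * f y) * (∑ b, 𝕔 (v b) * w b) := by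
        rw [Finset.sum_mul_sum]
        refine Finset.sum_congr rfl fun y _ => Finset.sum_congr rfl fun b _ => by ring
    _ = ∑ b, 𝕔 (v b) * w b := by rw [hf1, one_mul]

lemma perm4C {M : Type*} [AddCommMonoid M] (g : ι → ι → ι → ι → M) :
    ∑ a, ∑ b, ∑ x, ∑ y, g a b x y = ∑ b, ∑ y, ∑ a, ∑ x, g a b x y :=
  calc ∑ a, ∑ b, ∑ x, ∑ y, g a b x y
      = ∑ b, ∑ a, ∑ x, ∑ y, g a b x y := sw4_1 _
    _ = ∑ b, ∑ a, ∑ y, ∑ x, g a b x y := sw4_3 _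
    _ = ∑ b, ∑ y, ∑ a, ∑ x, g a b x y := sw4_2 _

/-- `⟨R v, w⟩ = ⟨v, w⟩` when `w ⊗ f` is fixed by `V*`. -/
lemma innerR (hf1 : ∑ x, 𝕔 (f x) * f x = 1) {w : EuclideanSpace ℂ ι}
    (hw : ∀ b y, ∑ a, ∑ x, 𝕔 (V (a, x) (b, y)) * (w a * f x) = w b * f y)
    (v : EuclideanSpace ℂ ι) :
    ∑ a, 𝕔 (appM (Rslice V f f) v a) * w a = ∑ b, 𝕔 (v b) * w b := by
  calc ∑ a, 𝕔 (appM (Rslice V f f) v a) * w a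
      = ∑ a, (∑ b, (∑ x, ∑ y, (f x * 𝕔 (f y)) * 𝕔 (V (a, x) (b, y))) * 𝕔 (v b)) * w a := by
        refine Finset.sum_congr rfl fun a _ => ?_
        show 𝕔 (∑ b, Rslice V f f a b * v b) * w a = _
        rw [map_sum]
        refine congrArg (· * w a) (Finset.sum_congr rfl fun b _ => ?_)
        rw [map_mul]
        refine congrArg (· * 𝕔 (v b)) ?_
        show 𝕔 (∑ x, ∑ y, 𝕔 (f x) * f y * V (a, x) (b, y)) = _
        simp only [map_sum, map_mul, Complex.conj_conj]
    _ = ∑ a, ∑ b, ∑ x, ∑ y,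
          ((f x * 𝕔 (f y)) * 𝕔 (V (a, x) (b, y)) * 𝕔 (v b)) * w a := by
        simp only [Finset.sum_mul]
    _ = ∑ b, ∑ y, ∑ a, ∑ x,
          ((f x * 𝕔 (f y)) * 𝕔 (V (a, x) (b, y)) * 𝕔 (v b)) * w a := perm4C _
    _ = ∑ b, ∑ y, (𝕔 (v b) * 𝕔 (f y)) * (∑ a, ∑ x, 𝕔 (V (a, x) (b, y)) * (w a * f x)) := by
        refine Finset.sum_congr rfl fun b _ => Finset.sum_congr rfl fun y _ => ?_
        simp only [Finset.mul_sum]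
        refine Finset.sum_congr rfl fun a _ => Finset.sum_congr rfl fun x _ => by ring
    _ = ∑ b, ∑ y, (𝕔 (v b) * 𝕔 (f y)) * (w b * f y) := by
        refine Finset.sum_congr rfl fun b _ => Finset.sum_congr rfl fun y _ => ?_
        rw [hw b y]
    _ = (∑ b, 𝕔 (v b) * w b) * (∑ y, 𝕔 (f y) * f y) := by
        rw [Finset.sum_mul_sum]
        refine Finset.sum_congr rfl fun b _ => Finset.sum_congr rfl fun y _ => by ring
    _ = ∑ b, 𝕔 (v b) * w b := by rw [hf1, mul_one]

lemma appM_mul {κ : Type*} [Fintype κ] (M N : Matrix κ κ ℂ) (v : EuclideanSpace ℂ κ) :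
    appM (M * N) v = appM M (appM N v) := by
  ext i
  show ∑ j, (M * N) i j * v j = ∑ k, M i k * (∑ j, N k j * v j)
  simp only [Matrix.mul_apply, Finset.sum_mul, Finset.mul_sum]
  rw [Finset.sum_comm]
  exact Finset.sum_congr rfl fun j _ => Finset.sum_congr rfl fun k _ => by ring

lemma appM_inj {κ : Type*} [Fintype κ] [DecidableEq κ] {M N : Matrix κ κ ℂ}
    (h : ∀ v, appM M v = appM N v) : M = N := by
  ext i j
  have h1 := congrArg (fun w : EuclideanSpace ℂ κ => w i) (h (EuclideanSpace.single j 1))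
  simpa [appM, EuclideanSpace.single_apply, mul_ite, Finset.sum_ite_eq'] using h1

end Aux

/-- `L(ω_ff)` and `ρ(ω_ff)` are the orthogonal projections onto `H^f`
and `H_f` respectively, and they commute. -/
theorem Lslice_Rslice_orthogonalProjections {ι : Type*} [Fintype ι] [DecidableEq ι] [Nonempty ι]
    (V : Matrix (ι × ι) (ι × ι) ℂ) (hV : IsMU V)
    (f : EuclideanSpace ℂ ι) (hf : ‖f‖ = 1)
    (hff : mact V (tens f f) = tens f f) :
    (∀ v : EuclideanSpace ℂ ι,
        appM (Lslice V f f) v = (Submodule.orthogonalProjectionOnto (subUp V f) v : EuclideanSpace ℂ ι)) ∧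
    (∀ v : EuclideanSpace ℂ ι,
        appM (Rslice V f f) v = (Submodule.orthogonalProjectionOnto (subDown V f) v : EuclideanSpace ℂ ι)) ∧
    Lslice V f f * Rslice V f f = Rslice V f f * Lslice V f f := by

  classical
  obtain ⟨hV1, hV2, hP⟩ := hV
  have hff' : mact V (tens f f) = tens f f := hff
  have hf1 : ∑ x, (starRingEnd ℂ) (f x) * f x = 1 := nrm_one hf
  have memUp : ∀ η : EuclideanSpace ℂ ι,
      η ∈ subUp V f ↔ appM V (tens f η) = tens f η := by
    intro η
    rw [subUp, LinearMap.mem_ker, LinearMap.sub_apply, LinearMap.comp_apply, sub_eq_zero]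
    exact Iff.rfl
  have memDown : ∀ η : EuclideanSpace ℂ ι,
      η ∈ subDown V f ↔ appM V (tens η f) = tens η f := by
    intro η
    rw [subDown, LinearMap.mem_ker, LinearMap.sub_apply, LinearMap.comp_apply, sub_eq_zero]
    exact Iff.rfl
  have hL : ∀ v : EuclideanSpace ℂ ι,
      appM (Lslice V f f) v = (Submodule.orthogonalProjectionOnto (subUp V f) v : EuclideanSpace ℂ ι) := by
    intro v
    refine (Submodule.eq_starProjection_of_mem_of_inner_eq_zero ?_ ?_).symm
    · rw [memUp]
      apply mem_up_of_Lfixed hV2 hf1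
      rw [← appM_mul, L_idem hV2 hP hff' hf1]
    · intro w hw
      have hwfix : appM V (tens f w) = tens f w := (memUp w).mp hw
      have hgfix : ∀ p : ι × ι, ∑ q, V p q * (f q.1 * w q.2) = f p.1 * w p.2 :=
        fun p => congrArg (fun v : EuclideanSpace ℂ (ι × ι) => v p) hwfix
      have hwstar : ∀ y b : ι,
          ∑ x, ∑ a, (starRingEnd ℂ) (V (x, a) (y, b)) * (f x * w a) = f y * w b := by
        intro y b
        have h := starfix hV2 (fun q => f q.1 * w q.2) hgfix (y, b)
        rw [Fintype.sum_prod_type] at h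
        exact h
      have e1 : ⟪(appM (Lslice V f f) v : EuclideanSpace ℂ ι), w⟫_ℂ
          = ∑ b, (starRingEnd ℂ) (v b) * w b := by
        rw [show ⟪(appM (Lslice V f f) v : EuclideanSpace ℂ ι), w⟫_ℂ
            = ∑ a, (starRingEnd ℂ) (appM (Lslice V f f) v a) * w a from by
          rw [PiLp.inner_apply]; exact Finset.sum_congr rfl fun i _ => by rw [RCLike.inner_apply]; ring]
        exact innerL hf1 hwstar v
      have e2 : ⟪v, w⟫_ℂ = ∑ b, (starRingEnd ℂ) (v b) * w b := by
        rw [PiLp.inner_apply]; exact Finset.sum_congr rfl fun i _ => by rw [RCLike.inner_apply]; ring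
      rw [inner_sub_left, e1, e2, sub_self]
  have hR : ∀ v : EuclideanSpace ℂ ι,
      appM (Rslice V f f) v = (Submodule.orthogonalProjectionOnto (subDown V f) v : EuclideanSpace ℂ ι) := by
    intro v
    refine (Submodule.eq_starProjection_of_mem_of_inner_eq_zero ?_ ?_).symm
    · rw [memDown]
      apply mem_down_of_Rfixed hV2 hf1
      rw [← appM_mul, R_idem hV2 hP hff' hf1]
    · intro w hw
      have hwfix : appM V (tens w f) = tens w f := (memDown w).mp hw
      have hgfix : ∀ p : ι × ι, ∑ q, V p q * (w q.1 * f q.2) = w p.1 * f p.2 :=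
        fun p => congrArg (fun v : EuclideanSpace ℂ (ι × ι) => v p) hwfix
      have hwstar : ∀ b y : ι,
          ∑ a, ∑ x, (starRingEnd ℂ) (V (a, x) (b, y)) * (w a * f x) = w b * f y := by
        intro b y
        have h := starfix hV2 (fun q => w q.1 * f q.2) hgfix (b, y)
        rw [Fintype.sum_prod_type] at h
        exact h
      have e1 : ⟪(appM (Rslice V f f) v : EuclideanSpace ℂ ι), w⟫_ℂ
          = ∑ b, (starRingEnd ℂ) (v b) * w b := by
        rw [show ⟪(appM (Rslice V f f) v : EuclideanSpace ℂ ι), w⟫_ℂ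
            = ∑ a, (starRingEnd ℂ) (appM (Rslice V f f) v a) * w a from by
          rw [PiLp.inner_apply]; exact Finset.sum_congr rfl fun i _ => by rw [RCLike.inner_apply]; ring]
        exact innerR hf1 hwstar v
      have e2 : ⟪v, w⟫_ℂ = ∑ b, (starRingEnd ℂ) (v b) * w b := by
        rw [PiLp.inner_apply]; exact Finset.sum_congr rfl fun i _ => by rw [RCLike.inner_apply]; ring
      rw [inner_sub_left, e1, e2, sub_self]
  refine ⟨hL, hR, ?_⟩
  have hinv : ∀ ζ : EuclideanSpace ℂ ι, ζ ∈ subDown V f →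
      (Submodule.orthogonalProjectionOnto (subUp V f) ζ : EuclideanSpace ℂ ι) ∈ subDown V f := by
    intro ζ hζ
    have hζd : appM V (tens ζ f) = tens ζ f := (memDown ζ).mp hζ
    have h := L_inv hP hff' (show mact V (tens ζ f) = tens ζ f from hζd)
    rw [hL ζ] at h
    exact (memDown _).mpr h
  apply appM_inj
  intro v
  rw [appM_mul, appM_mul, hR v, hL v,
    hL ((Submodule.orthogonalProjectionOnto (subDown V f) v : EuclideanSpace ℂ ι)),
    hR ((Submodule.orthogonalProjectionOnto (subUp V f) v : EuclideanSpace ℂ ι))]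
  refine (Submodule.eq_starProjection_of_mem_of_inner_eq_zero
    (hinv _ (SetLike.coe_mem _)) ?_).symm
  intro w hw
  have hsub : (Submodule.orthogonalProjectionOnto (subUp V f) v : EuclideanSpace ℂ ι)
      - (Submodule.orthogonalProjectionOnto (subUp V f)
          ((Submodule.orthogonalProjectionOnto (subDown V f) v : EuclideanSpace ℂ ι)) : EuclideanSpace ℂ ι)
      = (Submodule.orthogonalProjectionOnto (subUp V f)
          (v - (Submodule.orthogonalProjectionOnto (subDown V f) v : EuclideanSpace ℂ ι)) : EuclideanSpace ℂ ι) := by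
    rw [map_sub]
    rfl
  rw [hsub, ← Submodule.starProjection_apply, Submodule.inner_starProjection_left_eq_right]
  have hvq : v - (Submodule.orthogonalProjectionOnto (subDown V f) v : EuclideanSpace ℂ ι)
      ∈ (subDown V f)ᗮ := Submodule.sub_starProjection_mem_orthogonal v
  have hpw : (Submodule.orthogonalProjectionOnto (subUp V f) w : EuclideanSpace ℂ ι) ∈ subDown V f :=
    hinv w hw
  exact Submodule.inner_left_of_mem_orthogonal hpw hvq


end MU
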